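/- For every integer m with 1 ≤ m ≤ 199, P(X_{2m} < 0 | X_2 < 0) = 1/2 + (1/2^{2m-1}) · C(2m-2, m-1), where C(2m-2, m-1) is the binomial coefficient and the conditioning event X_2 < 0 has probability 1/4 > 0. -/

import Mathlib

/-!
Off a null set every `C j` is `±1`, and then `1 - X k = 1.01 ^ a * 0.99 ^ (k - a)`, where `a`
counts the indices `j ≤ k` with `C j = -1`. Since `1.01 * 0.99 < 1` while
`1.01 ^ 2 * 0.9999 ^ 198 > 1`, for `k = 2m ≤ 398` we get `X k < 0` exactly when `a > m`; in
particular `X 2 < 0` means `C 1 = C 2 = -1`. Every sign pattern on `2m` indices has probability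
`2 ^ (-2m)`, so the conditional probability is the proportion of subsets of the remaining `2m - 2`
indices with at least `m - 1` elements. Complementation pairs these with the subsets of at most
`m - 1` elements, so the proportion is `(1 + C(2m-2, m-1) / 2 ^ (2m-2)) / 2`.
-/

open MeasureTheory ProbabilityTheory Finset

section SignPatterns

variable {Ω : Type*} {C : ℕ → Ω → ℝ}

def signPattern (C : ℕ → Ω → ℝ) (s t : Finset ℕ) : Set Ω :=
  ⋂ j ∈ s, {ω | C j ω = if j ∈ t then -1 else 1}

lemma filter_eq_of_mem_signPattern {s t : Finset ℕ} {ω : Ω} (hts : t ⊆ s)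
    (hω : ω ∈ signPattern C s t) : {j ∈ s | C j ω = -1} = t := by
  have hω' : ∀ j ∈ s, C j ω = if j ∈ t then -1 else 1 := fun j hj => Set.mem_iInter₂.mp hω j hj
  ext j
  by_cases hjt : j ∈ t
  · simpa [hjt, hts hjt] using hω' j (hts hjt)
  · simp only [mem_filter, hjt, iff_false, not_and]
    intro hjs
    simp [hω' j hjs, hjt]
    norm_num

lemma mem_signPattern_filter {s : Finset ℕ} {ω : Ω} (hω : ∀ j ∈ s, C j ω = 1 ∨ C j ω = -1) :
    ω ∈ signPattern C s {j ∈ s | C j ω = -1} := by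
  refine Set.mem_iInter₂.mpr fun j hj => ?_
  rcases hω j hj with h | h <;> simp [h, hj]

variable [MeasurableSpace Ω] {μ : Measure Ω}

lemma measurableSet_signPattern (hMeas : ∀ j, Measurable (C j)) (s t : Finset ℕ) :
    MeasurableSet (signPattern C s t) :=
  .biInter s.countable_toSet fun j _ => hMeas j (measurableSet_singleton _)

lemma measure_signPattern (hIndep : iIndepFun C μ)
    (hHead : ∀ j, μ {ω | C j ω = 1} = 1 / 2) (hTail : ∀ j, μ {ω | C j ω = -1} = 1 / 2)
    (s t : Finset ℕ) : μ (signPattern C s t) = (1 / 2) ^ #s := by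
  rw [signPattern, hIndep.meas_biInter (s := fun j => {ω | C j ω = if j ∈ t then -1 else 1})
    fun j _ => ⟨{if j ∈ t then -1 else 1}, measurableSet_singleton _, rfl⟩, ← prod_const]
  refine prod_congr rfl fun j _ => ?_
  split_ifs
  exacts [hTail j, hHead j]

variable [IsProbabilityMeasure μ]

lemma ae_eq_one_or_eq_neg_one (hMeas : ∀ j, Measurable (C j))
    (hHead : ∀ j, μ {ω | C j ω = 1} = 1 / 2) (hTail : ∀ j, μ {ω | C j ω = -1} = 1 / 2) :
    ∀ᵐ ω ∂μ, ∀ j, C j ω = 1 ∨ C j ω = -1 := by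
  refine ae_all_iff.mpr fun j => ?_
  have hdisj : Disjoint {ω | C j ω = 1} {ω | C j ω = -1} :=
    Set.disjoint_left.mpr fun ω h1 h2 => by norm_num [Set.mem_ofPred_eq.mp h1] at h2
  have hmeas : MeasurableSet ({ω | C j ω = 1} ∪ {ω | C j ω = -1}) :=
    (hMeas j (measurableSet_singleton _)).union (hMeas j (measurableSet_singleton _))
  refine (ae_mem_iff_measure_eq hmeas.nullMeasurableSet).mpr ?_
  rw [measure_union hdisj (hMeas j (measurableSet_singleton _)), hHead, hTail,
    ENNReal.add_halves, measure_univ]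

lemma measure_eq_card_mul_of_filter_iff (hMeas : ∀ j, Measurable (C j))
    (hIndep : iIndepFun C μ)
    (hHead : ∀ j, μ {ω | C j ω = 1} = 1 / 2) (hTail : ∀ j, μ {ω | C j ω = -1} = 1 / 2)
    (s : Finset ℕ) (E : Set Ω) (p : Finset ℕ → Prop) [DecidablePred p]
    (hE : ∀ ω, (∀ j ∈ s, C j ω = 1 ∨ C j ω = -1) → (ω ∈ E ↔ p {j ∈ s | C j ω = -1})) :
    μ E = #{t ∈ s.powerset | p t} * (1 / 2) ^ #s := by
  have hE_ae : E =ᵐ[μ] ⋃ t ∈ {t ∈ s.powerset | p t}, signPattern C s t := by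
    rw [Filter.eventuallyEq_set]
    filter_upwards [ae_eq_one_or_eq_neg_one hMeas hHead hTail] with ω hω
    have hωs : ∀ j ∈ s, C j ω = 1 ∨ C j ω = -1 := fun j _ => hω j
    simp only [Set.mem_iUnion, mem_filter, mem_powerset, exists_prop]
    rw [hE ω hωs]
    constructor
    · exact fun hp => ⟨_, ⟨filter_subset _ _, hp⟩, mem_signPattern_filter hωs⟩
    · rintro ⟨t, ⟨hts, hpt⟩, hωt⟩
      rwa [filter_eq_of_mem_signPattern hts hωt]
  have hdisj : Set.PairwiseDisjoint ↑{t ∈ s.powerset | p t} (signPattern C s) := by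
    intro t ht t' ht' hne
    refine Set.disjoint_left.mpr fun ω hωt hωt' => hne ?_
    simp only [coe_filter, mem_powerset, Set.mem_ofPred_eq] at ht ht'
    rw [← filter_eq_of_mem_signPattern ht.1 hωt, filter_eq_of_mem_signPattern ht'.1 hωt']
  rw [measure_congr hE_ae,
    measure_biUnion_finset hdisj fun t _ => measurableSet_signPattern hMeas s t,
    sum_congr rfl fun t _ => measure_signPattern hIndep hHead hTail s t, sum_const, nsmul_eq_mul]

end SignPatterns

section Counting

variable {α : Type*} [DecidableEq α]

lemma card_filter_powerset_union_of_superset {a u : Finset α} (h : Disjoint a u)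
    (P : ℕ → Prop) [DecidablePred P] :
    #{t ∈ (a ∪ u).powerset | a ⊆ t ∧ P #t} = #{v ∈ u.powerset | P (#a + #v)} := by
  symm
  refine card_nbij' (a ∪ ·) (· \ a) ?_ ?_ ?_ ?_
  · intro v hv
    simp only [coe_filter, mem_powerset, Set.mem_ofPred_eq] at hv ⊢
    refine ⟨union_subset_union_right hv.1, subset_union_left, ?_⟩
    rw [card_union_of_disjoint (h.mono_right hv.1)]
    exact hv.2
  · intro t ht
    simp only [coe_filter, mem_powerset, Set.mem_ofPred_eq] at ht ⊢
    refine ⟨sdiff_le_iff.mpr ht.1, ?_⟩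
    rw [← card_union_of_disjoint disjoint_sdiff, union_sdiff_of_subset ht.2.1]
    exact ht.2.2
  · intro v hv
    simp only [coe_filter, mem_powerset, Set.mem_ofPred_eq] at hv
    exact union_sdiff_cancel_left (h.mono_right hv.1)
  · intro t ht
    simp only [coe_filter, mem_powerset, Set.mem_ofPred_eq] at ht
    exact union_sdiff_of_subset ht.2.1

lemma two_mul_card_filter_powerset_le_card {u : Finset α} {n : ℕ} (hu : #u = 2 * n) :
    2 * #{v ∈ u.powerset | n ≤ #v} = 2 ^ (2 * n) + (2 * n).choose n := by
  have hcompl : #{v ∈ u.powerset | n ≤ #v} = #{v ∈ u.powerset | #v ≤ n} := by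
    refine card_nbij' (u \ ·) (u \ ·) ?_ ?_ ?_ ?_
    all_goals
      intro v hv
      simp only [coe_filter, mem_powerset, Set.mem_ofPred_eq] at hv
    · simp only [coe_filter, mem_powerset, Set.mem_ofPred_eq]
      refine ⟨sdiff_subset, ?_⟩
      rw [card_sdiff_of_subset hv.1]
      omega
    · simp only [coe_filter, mem_powerset, Set.mem_ofPred_eq]
      refine ⟨sdiff_subset, ?_⟩
      rw [card_sdiff_of_subset hv.1]
      omega
    · exact Finset.sdiff_sdiff_eq_self hv.1
    · exact Finset.sdiff_sdiff_eq_self hv.1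
  have hunion : {v ∈ u.powerset | n ≤ #v} ∪ {v ∈ u.powerset | #v ≤ n} = u.powerset := by
    rw [← filter_or, filter_true_of_mem fun v _ => le_total n #v]
  have hinter : {v ∈ u.powerset | n ≤ #v} ∩ {v ∈ u.powerset | #v ≤ n} = powersetCard n u := by
    rw [← filter_and, powersetCard_eq_filter]
    exact filter_congr fun v _ => le_antisymm_iff.symm.trans eq_comm
  calc 2 * #{v ∈ u.powerset | n ≤ #v}
      = #({v ∈ u.powerset | n ≤ #v} ∪ {v ∈ u.powerset | #v ≤ n})
        + #({v ∈ u.powerset | n ≤ #v} ∩ {v ∈ u.powerset | #v ≤ n}) := by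
        rw [card_union_add_card_inter, ← hcompl, two_mul]
    _ = 2 ^ (2 * n) + (2 * n).choose n := by
        rw [hunion, hinter, card_powerset, card_powersetCard, hu]

end Counting

lemma prod_one_sub_mul_of_sign (δ : ℝ) (s : Finset ℕ) {c : ℕ → ℝ}
    (hc : ∀ j ∈ s, c j = 1 ∨ c j = -1) :
    ∏ j ∈ s, (1 - δ * c j) = (1 + δ) ^ #{j ∈ s | c j = -1} * (1 - δ) ^ #{j ∈ s | c j ≠ -1} := by
  rw [← prod_filter_mul_prod_filter_not s (fun j => c j = -1), ← prod_const, ← prod_const]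
  congr 1
  · refine prod_congr rfl fun j hj => ?_
    rw [(mem_filter.mp hj).2]
    ring
  · refine prod_congr rfl fun j hj => ?_
    obtain ⟨hjs, hj⟩ := mem_filter.mp hj
    rw [(hc j hjs).resolve_right hj]
    ring

lemma one_lt_pow_mul_pow_iff {a c m : ℕ} (h : a + c = 2 * m) (hm : m ≤ 199) :
    1 < (1.01 : ℝ) ^ a * 0.99 ^ c ↔ m < a := by
  constructor
  · intro hlt
    by_contra! ha
    have hrw : (1.01 : ℝ) ^ a * 0.99 ^ c = (1.01 * 0.99) ^ a * 0.99 ^ (c - a) := by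
      rw [mul_pow, mul_assoc, ← pow_add, Nat.add_sub_cancel' (by omega)]
    have : (1.01 : ℝ) ^ a * 0.99 ^ c ≤ 1 := by
      rw [hrw]
      exact mul_le_one₀ (pow_le_one₀ (by norm_num) (by norm_num)) (by positivity)
        (pow_le_one₀ (by norm_num) (by norm_num))
    linarith
  · intro ha
    calc (1 : ℝ) < 1.01 ^ 2 * 0.9999 ^ 198 := by norm_num
      _ ≤ 1.01 ^ 2 * 0.9999 ^ c :=
          mul_le_mul_of_nonneg_left
            (pow_le_pow_of_le_one (by norm_num) (by norm_num) (by omega)) (by positivity)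
      _ = 1.01 ^ (c + 2) * 0.99 ^ c := by
          rw [show (0.9999 : ℝ) = 1.01 * 0.99 by norm_num, mul_pow, pow_add]
          ring
      _ ≤ 1.01 ^ a * 0.99 ^ c := by
          gcongr
          exacts [by norm_num, by omega]

lemma one_sub_prod_neg_iff {m : ℕ} (hm : m ≤ 199) {c : ℕ → ℝ}
    (hc : ∀ j ∈ Icc 1 (2 * m), c j = 1 ∨ c j = -1) :
    1 - ∏ j ∈ Icc 1 (2 * m), (1 - 0.01 * c j) < 0 ↔ m < #{j ∈ Icc 1 (2 * m) | c j = -1} := by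
  have hcard := card_filter_add_card_filter_not (s := Icc 1 (2 * m)) (fun j => c j = -1)
  rw [Nat.card_Icc, Nat.add_sub_cancel] at hcard
  rw [sub_neg, prod_one_sub_mul_of_sign _ _ hc]
  rw [show (1 : ℝ) + 0.01 = 1.01 by norm_num, show (1 : ℝ) - 0.01 = 0.99 by norm_num]
  exact one_lt_pow_mul_pow_iff hcard hm

lemma one_sub_prod_Icc_one_two_neg_iff {c : ℕ → ℝ} (h₁ : c 1 = 1 ∨ c 1 = -1)
    (h₂ : c 2 = 1 ∨ c 2 = -1) :
    1 - ∏ j ∈ Icc 1 2, (1 - 0.01 * c j) < 0 ↔ c 1 = -1 ∧ c 2 = -1 := by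
  rw [show Icc 1 2 = {1, 2} by rfl, prod_pair (by norm_num)]
  rcases h₁ with h₁ | h₁ <;> rcases h₂ with h₂ | h₂ <;> norm_num [h₁, h₂]

lemma two_mul_card_filter_powerset_Icc (m : ℕ) :
    2 * #{t ∈ (Icc 1 (2 * (m + 1))).powerset | {1, 2} ⊆ t ∧ m + 1 < #t}
      = 2 ^ (2 * m) + (2 * m).choose m := by
  have hsplit : Icc 1 (2 * (m + 1)) = {1, 2} ∪ Icc 3 (2 * m + 2) := by
    ext j; simp only [mem_union, mem_insert, mem_singleton, mem_Icc]; omega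
  have hdisj : Disjoint ({1, 2} : Finset ℕ) (Icc 3 (2 * m + 2)) := by
    simp [disjoint_left]
  rw [hsplit, card_filter_powerset_union_of_superset hdisj (m + 1 < ·),
    ← two_mul_card_filter_powerset_le_card (u := Icc 3 (2 * m + 2)) (by simp)]
  congr 2
  exact filter_congr fun v _ => by simp; omega

lemma toReal_inv_quarter_mul_mul_half_pow {N n : ℕ}
    (h : 2 * N = 2 ^ (2 * n) + (2 * n).choose n) :
    (((1 : ENNReal) / 4)⁻¹ * (N * (1 / 2) ^ (2 * (n + 1)))).toReal
      = 1 / 2 + 1 / 2 ^ (2 * n + 1) * ((2 * n).choose n : ℝ) := by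
  have hR : (2 : ℝ) * N = 2 ^ (2 * n) + (2 * n).choose n := by exact_mod_cast h
  simp only [ENNReal.toReal_mul, ENNReal.toReal_inv, ENNReal.toReal_div, ENNReal.toReal_pow,
    ENNReal.toReal_natCast, ENNReal.toReal_one, ENNReal.toReal_ofNat]
  rw [one_div_pow, mul_add, pow_add, pow_succ]
  field_simp
  linear_combination (2 * 2 ^ (2 * n + 1) : ℝ) * hR

/-- For the CPDO net capital driven by i.i.d. fair signs with `δ = 0.01`:
the conditioning event `{X 2 < 0}` has probability `1/4 > 0`, and for every `1 ≤ m ≤ 199`,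
`P(X (2m) < 0 | X 2 < 0) = 1/2 + (1/2^(2m-1)) · C(2m-2, m-1)`. -/
theorem cpdo_even_loss_given_second_loss
    {Ω : Type*} [MeasureSpace Ω] [IsProbabilityMeasure (ℙ : Measure Ω)]
    (δ : ℝ) (hδ : δ = 0.01)
    (C : ℕ → Ω → ℝ)
    (hMeas : ∀ j, Measurable (C j))
    (hIndep : iIndepFun C ℙ)
    (hHead : ∀ j, ℙ {ω | C j ω = 1} = 1/2)
    (hTail : ∀ j, ℙ {ω | C j ω = -1} = 1/2)
    (X : ℕ → Ω → ℝ)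
    (hX : ∀ (k : ℕ) (ω : Ω), X k ω = 1 - ∏ j ∈ Finset.Icc 1 k, (1 - δ * C j ω)) :
    ℙ {ω | X 2 ω < 0} = 1/4 ∧
    ∀ m : ℕ, 1 ≤ m → m ≤ 199 →
      (ℙ[|{ω | X 2 ω < 0}] {ω | X (2 * m) ω < 0}).toReal
        = 1 / 2 + (1 / 2 ^ (2 * m - 1)) * (Nat.choose (2 * m - 2) (m - 1) : ℝ) := by
  subst hδ
  have hX2 : ∀ ω, C 1 ω = 1 ∨ C 1 ω = -1 → C 2 ω = 1 ∨ C 2 ω = -1 →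
      (X 2 ω < 0 ↔ C 1 ω = -1 ∧ C 2 ω = -1) := fun ω h₁ h₂ => by
    rw [hX, one_sub_prod_Icc_one_two_neg_iff h₁ h₂]
  have hloss : ℙ {ω | X 2 ω < 0} = 1 / 4 := by
    rw [measure_eq_card_mul_of_filter_iff hMeas hIndep hHead hTail (Icc 1 2) _ ({1, 2} ⊆ ·)
      fun ω hω => by simp [hX2 ω (hω 1 (by simp)) (hω 2 (by simp)), insert_subset_iff]]
    rw [show #{t ∈ (Icc 1 2).powerset | {1, 2} ⊆ t} = 1 by decide, show #(Icc 1 2) = 2 from rfl,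
      Nat.cast_one, one_mul, one_div, one_div, ← ENNReal.inv_pow]
    norm_num
  refine ⟨hloss, fun m hm₁ hm => ?_⟩
  obtain ⟨n, rfl⟩ : ∃ n, m = n + 1 := ⟨m - 1, by omega⟩
  have hjoint : ℙ ({ω | X 2 ω < 0} ∩ {ω | X (2 * (n + 1)) ω < 0})
      = #{t ∈ (Icc 1 (2 * (n + 1))).powerset | {1, 2} ⊆ t ∧ n + 1 < #t}
        * (1 / 2) ^ (2 * (n + 1)) := by
    rw [measure_eq_card_mul_of_filter_iff hMeas hIndep hHead hTail (Icc 1 (2 * (n + 1))) _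
      (fun t => {1, 2} ⊆ t ∧ n + 1 < #t) fun ω hω => ?_, Nat.card_Icc, Nat.add_sub_cancel]
    have h₁ : 1 ∈ Icc 1 (2 * (n + 1)) := by simp; omega
    have h₂ : 2 ∈ Icc 1 (2 * (n + 1)) := by simp
    rw [Set.mem_inter_iff, Set.mem_ofPred_eq, Set.mem_ofPred_eq, hX2 ω (hω 1 h₁) (hω 2 h₂),
      hX (2 * (n + 1)), one_sub_prod_neg_iff hm hω]
    simp [insert_subset_iff, h₁, h₂]
  have hmeas : MeasurableSet {ω | X 2 ω < 0} :=
    measurableSet_lt (funext (hX 2) ▸ by fun_prop) measurable_const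
  rw [cond_apply hmeas, hloss, hjoint,
    toReal_inv_quarter_mul_mul_half_pow (two_mul_card_filter_powerset_Icc n),
    show 2 * (n + 1) - 1 = 2 * n + 1 by omega, show 2 * (n + 1) - 2 = 2 * n by omega,
    Nat.add_sub_cancel]
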